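/- Let 0<x<1 be real and r∈ℂ with Re(r)>0, and assume [1]_r ≠ 0. The function u ↦ 1/([u]_r·[−u−1]_r) + 1/([−u]_r·[u−1]_r), whose two summands each have a simple pole at u=0, has a removable singularity at u=0, i.e. it extends to a holomorphic function on a neighbourhood of 0. -/

import Mathlib

/-!
`[u]_r` is entire and odd, so `[0]_r = 0` and `[-1]_r = -[1]_r ≠ 0`. By oddness the sum equals
`([-u-1]_r⁻¹ - [u-1]_r⁻¹) / [u]_r`, whose numerator is holomorphic near `0` and vanishes there.
Splitting off the factor `1 - x^{2u}` of `(x^{2u}; x^{2r})_∞` gives `[u]_r = (1 - x^{2u}) E(u)`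
with `E` entire and `E(0) = 1`, so `[u]_r` has derivative `-2 log x ≠ 0` at `0`: a simple zero.
Dividing numerator and denominator by `u` (i.e. passing to their `dslope`s at `0`) removes the
singularity.
-/

open Complex

/-- `x^w := exp(w · log x)` for real `x` and complex `w`. -/
noncomputable def xpow (x : ℝ) (w : ℂ) : ℂ := Complex.exp (w * (Real.log x : ℂ))

/-- The infinite `q`-Pochhammer product `(z;q)_∞ = ∏_{j=0}^∞ (1 − q^j z)`. -/
noncomputable def qPoch (z q : ℂ) : ℂ := ∏' j : ℕ, (1 - q ^ j * z)

/-- `Θ_q(z) = (z;q)_∞ (q z⁻¹;q)_∞ (q;q)_∞`. -/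
noncomputable def jacTheta0 (q z : ℂ) : ℂ := qPoch z q * qPoch (q * z⁻¹) q * qPoch q q

/-- The Jacobi theta function `[u]_r = x^{u²/r − u} Θ_{x^{2r}}(x^{2u}) / ((x^{2r};x^{2r})_∞)³`. -/
noncomputable def jTheta (x : ℝ) (r u : ℂ) : ℂ :=
  xpow x (u ^ 2 / r - u) * jacTheta0 (xpow x (2 * r)) (xpow x (2 * u)) /
    (qPoch (xpow x (2 * r)) (xpow x (2 * r))) ^ 3

open Filter Topology

theorem exists_differentiableOn_eq_div_of_deriv_ne_zero {N T : ℂ → ℂ} {V : Set ℂ} {c : ℂ}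
    (hV : IsOpen V) (hcV : c ∈ V) (hN : DifferentiableOn ℂ N V) (hT : DifferentiableOn ℂ T V)
    (hNc : N c = 0) (hTc : T c = 0) (hT' : deriv T c ≠ 0) :
    ∃ (g : ℂ → ℂ) (U : Set ℂ), IsOpen U ∧ c ∈ U ∧ DifferentiableOn ℂ g U ∧
      ∀ u ∈ U, u ≠ c → g u = N u / T u := by
  have hVc : V ∈ 𝓝 c := hV.mem_nhds hcV
  have hN' := (differentiableOn_dslope hVc).mpr hN
  have hT'' := (differentiableOn_dslope hVc).mpr hT
  refine ⟨fun u => dslope N c u / dslope T c u, V ∩ dslope T c ⁻¹' {0}ᶜ,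
    hT''.continuousOn.isOpen_inter_preimage hV isOpen_compl_singleton,
    ⟨hcV, by simpa [dslope_same] using hT'⟩,
    (hN'.mono Set.inter_subset_left).div (hT''.mono Set.inter_subset_left) fun u hu => hu.2,
    fun u _ hu => ?_⟩
  simp only [dslope_of_ne _ hu, slope_def_field, hNc, hTc, sub_zero]
  rw [div_div_div_cancel_right₀ (sub_ne_zero.mpr hu)]

section QPochhammer

variable {q : ℂ}

lemma summable_norm_pow_mul (hq : ‖q‖ < 1) (w : ℂ) : Summable fun j : ℕ => ‖-(q ^ j * w)‖ := by
  simpa [norm_mul, norm_pow] using (summable_geometric_of_lt_one (norm_nonneg q) hq).mul_right ‖w‖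

lemma multipliable_qPoch (hq : ‖q‖ < 1) (w : ℂ) : Multipliable fun j : ℕ => 1 - q ^ j * w := by
  simpa [sub_eq_add_neg] using multipliable_one_add_of_summable (summable_norm_pow_mul hq w)

lemma qPoch_ne_zero (hq : ‖q‖ < 1) {w : ℂ} (hw : ∀ j : ℕ, 1 - q ^ j * w ≠ 0) : qPoch w q ≠ 0 := by
  simpa [qPoch, sub_eq_add_neg] using tprod_one_add_ne_zero_of_summable
    (by simpa [sub_eq_add_neg] using hw) (summable_norm_pow_mul hq w)

lemma qPoch_self_ne_zero (hq : ‖q‖ < 1) : qPoch q q ≠ 0 := by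
  refine qPoch_ne_zero hq fun j h => ?_
  have : ‖q ^ (j + 1)‖ < 1 := by rw [norm_pow]; exact pow_lt_one₀ (norm_nonneg q) hq (by omega)
  rw [pow_succ, ← sub_eq_zero.mp h] at this
  simp at this

lemma qPoch_eq_one_sub_mul (hq : ‖q‖ < 1) (w : ℂ) : qPoch w q = (1 - w) * qPoch (q * w) q := by
  have hshift : ∀ j : ℕ, 1 - q ^ (j + 1) * w = 1 - q ^ j * (q * w) := fun j => by ring
  have hm : Multipliable fun j : ℕ => 1 - q ^ (j + 1) * w := by
    simpa only [hshift] using multipliable_qPoch hq (q * w)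
  rw [qPoch, tprod_eq_zero_mul' (f := fun j => 1 - q ^ j * w) hm, pow_zero, one_mul, qPoch]
  simp only [hshift]

lemma differentiableOn_qPoch_ball (hq : ‖q‖ < 1) (R : ℝ) :
    DifferentiableOn ℂ (fun w => qPoch w q) (Metric.ball 0 R) := by
  have hbound : ∀ᶠ j in atTop, ∀ w ∈ Metric.ball (0 : ℂ) R, ‖-(q ^ j * w)‖ ≤ ‖q‖ ^ j * R := by
    refine .of_forall fun j w hw => ?_
    rw [mem_ball_zero_iff] at hw
    rw [norm_neg, norm_mul, norm_pow]
    gcongr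
  have h := Summable.hasProdLocallyUniformlyOn_nat_one_add Metric.isOpen_ball
    ((summable_geometric_of_lt_one (norm_nonneg q) hq).mul_right R) hbound (fun j => by fun_prop)
  simp only [← sub_eq_add_neg] at h
  exact h.differentiableOn (.of_forall fun s => by fun_prop) Metric.isOpen_ball

lemma differentiable_qPoch (hq : ‖q‖ < 1) : Differentiable ℂ (fun w => qPoch w q) := fun w =>
  (differentiableOn_qPoch_ball hq (‖w‖ + 1)).differentiableAt
    (Metric.isOpen_ball.mem_nhds (by simp))

end QPochhammer

section Theta

lemma xpow_add (x : ℝ) (a b : ℂ) : xpow x (a + b) = xpow x a * xpow x b := by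
  rw [xpow, xpow, xpow, add_mul, Complex.exp_add]

lemma xpow_neg (x : ℝ) (a : ℂ) : xpow x (-a) = (xpow x a)⁻¹ := by
  rw [xpow, xpow, neg_mul, Complex.exp_neg]

@[simp]
lemma xpow_zero (x : ℝ) : xpow x 0 = 1 := by
  rw [xpow, zero_mul, Complex.exp_zero]

lemma xpow_ne_zero (x : ℝ) (w : ℂ) : xpow x w ≠ 0 := Complex.exp_ne_zero _

lemma hasDerivAt_xpow_const_mul (x : ℝ) (a u : ℂ) :
    HasDerivAt (fun u => xpow x (a * u)) (a * Real.log x * xpow x (a * u)) u := by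
  simpa [xpow, mul_comm, mul_left_comm, mul_assoc] using
    (((hasDerivAt_id u).const_mul a).mul_const (Real.log x : ℂ)).cexp

@[fun_prop]
lemma differentiable_xpow (x : ℝ) : Differentiable ℂ (xpow x) :=
  (differentiable_id.mul_const _).cexp

variable {x : ℝ}

lemma norm_xpow_lt_one (hx0 : 0 < x) (hx1 : x < 1) {w : ℂ} (hw : 0 < w.re) : ‖xpow x w‖ < 1 := by
  rw [xpow, Complex.norm_exp, Real.exp_lt_one_iff, re_mul_ofReal]
  exact mul_neg_of_pos_of_neg hw (Real.log_neg hx0 hx1)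

variable {r : ℂ}

lemma norm_nome_lt_one (hx0 : 0 < x) (hx1 : x < 1) (hr : 0 < r.re) : ‖xpow x (2 * r)‖ < 1 :=
  norm_xpow_lt_one hx0 hx1 (by simpa using hr)

lemma differentiable_jTheta (hx0 : 0 < x) (hx1 : x < 1) (hr : 0 < r.re) :
    Differentiable ℂ (jTheta x r) := by
  have hP := differentiable_qPoch (norm_nome_lt_one hx0 hx1 hr)
  unfold jTheta jacTheta0
  fun_prop (disch := exact fun _ => xpow_ne_zero _ _)

lemma jTheta_neg (hx0 : 0 < x) (hx1 : x < 1) (hr : 0 < r.re) (u : ℂ) :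
    jTheta x r (-u) = -jTheta x r u := by
  have hq := norm_nome_lt_one hx0 hx1 hr
  have hz := xpow_ne_zero x (2 * u)
  have e1 : xpow x (2 * -u) = (xpow x (2 * u))⁻¹ := by rw [mul_neg, xpow_neg]
  have e2 : xpow x ((-u) ^ 2 / r - -u) = xpow x (u ^ 2 / r - u) * xpow x (2 * u) := by
    rw [← xpow_add]
    ring_nf
  unfold jTheta jacTheta0
  rw [e1, e2, inv_inv, qPoch_eq_one_sub_mul hq (xpow x (2 * u))⁻¹,
    qPoch_eq_one_sub_mul hq (xpow x (2 * u))]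
  generalize xpow x (2 * r) = q
  generalize xpow x (2 * u) = z at hz ⊢
  field_simp
  ring

lemma jTheta_zero (hx0 : 0 < x) (hx1 : x < 1) (hr : 0 < r.re) : jTheta x r 0 = 0 := by
  simpa [CharZero.eq_neg_self_iff] using jTheta_neg hx0 hx1 hr 0

lemma hasDerivAt_jTheta_zero (hx0 : 0 < x) (hx1 : x < 1) (hr : 0 < r.re) :
    HasDerivAt (jTheta x r) (-(2 * Real.log x)) 0 := by
  have hq := norm_nome_lt_one hx0 hx1 hr
  set q := xpow x (2 * r)
  set E : ℂ → ℂ := fun u => xpow x (u ^ 2 / r - u) * qPoch (q * xpow x (2 * u)) q *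
    qPoch (q * (xpow x (2 * u))⁻¹) q * qPoch q q / qPoch q q ^ 3
  have hE : Differentiable ℂ E := by
    have hP := differentiable_qPoch hq
    fun_prop (disch := exact fun _ => xpow_ne_zero _ _)
  have hfactor : jTheta x r = fun u => (1 - xpow x (2 * u)) * E u := by
    funext u
    unfold jTheta jacTheta0
    rw [qPoch_eq_one_sub_mul hq]
    ring
  have hE0 : E 0 = 1 := by
    simp [E]
    field_simp [qPoch_self_ne_zero hq]
  have := ((hasDerivAt_xpow_const_mul x 2 0).const_sub 1).fun_mul (hE 0).hasDerivAt
  rw [hfactor]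
  refine this.congr_deriv ?_
  rw [mul_zero, xpow_zero, hE0]
  ring

end Theta

theorem stmt16 (x : ℝ) (hx0 : 0 < x) (hx1 : x < 1) (r : ℂ) (hr : 0 < r.re)
    (h1 : jTheta x r 1 ≠ 0) :
    ∃ (g : ℂ → ℂ) (U : Set ℂ), IsOpen U ∧ (0 : ℂ) ∈ U ∧ DifferentiableOn ℂ g U ∧
      ∀ u ∈ U, u ≠ 0 →
        g u = 1 / (jTheta x r u * jTheta x r (-u - 1)) +
            1 / (jTheta x r (-u) * jTheta x r (u - 1)) := by
  set T := jTheta x r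
  have hT : Differentiable ℂ T := differentiable_jTheta hx0 hx1 hr
  have hodd : ∀ u, T (-u) = -T u := jTheta_neg hx0 hx1 hr
  have hTc : Continuous T := hT.continuous
  set V := {u : ℂ | T (-u - 1) ≠ 0 ∧ T (u - 1) ≠ 0}
  have hV : IsOpen V :=
    (isOpen_ne_fun (by fun_prop) continuous_const).inter
      (isOpen_ne_fun (by fun_prop) continuous_const)
  have h0V : (0 : ℂ) ∈ V := by simpa [V, hodd] using h1
  have hN : DifferentiableOn ℂ (fun u => (T (-u - 1))⁻¹ - (T (u - 1))⁻¹) V :=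
    fun u hu => DifferentiableAt.differentiableWithinAt <| by
      obtain ⟨hu₁, hu₂⟩ := hu
      fun_prop (disch := assumption)
  have hT' : deriv T 0 ≠ 0 := by
    rw [(hasDerivAt_jTheta_zero hx0 hx1 hr : HasDerivAt T _ 0).deriv]
    simpa using (Real.log_neg hx0 hx1).ne
  obtain ⟨g, U, hU, h0U, hg, hgU⟩ := exists_differentiableOn_eq_div_of_deriv_ne_zero hV h0V hN
    hT.differentiableOn (by simp) (jTheta_zero hx0 hx1 hr) hT'
  refine ⟨g, U, hU, h0U, hg, fun u hu hu0 => ?_⟩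
  rw [hgU u hu hu0, hodd]
  ring
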